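/- There exists a unique α₀ ∈ (0,1) satisfying arctanh(√(1−α₀)) = 3√(1−α₀)/(2 − 3α₀); moreover α₀ < 2/3 (so the right-hand side is positive) and α₀ is approximately 0.121. -/

import Mathlib

/-- The inverse hyperbolic tangent. -/
noncomputable def artanh (x : ℝ) : ℝ := Real.log ((1 + x) / (1 - x)) / 2

/-! With `t = √(1 - α)` the equation reads `artanh t = 3t / (3t² - 1)`. Since `artanh > 0` on
`(0, 1)`, every solution has `3t² > 1`; on `(1/√3, 1)` the left side increases and the right side
decreases, so they meet at most once. Their difference changes sign on `[0.9371, 0.938]`, which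
gives the root and `α₀ = 1 - t₀² ∈ (0.1201, 0.1219)`. -/

open Set

noncomputable def artanhGap (t : ℝ) : ℝ := artanh t - 3 * t / (3 * t ^ 2 - 1)

lemma artanh_eq_real_artanh {x : ℝ} (hx : x ∈ Icc (-1) 1) : artanh x = Real.artanh x := by
  rw [Real.artanh_eq_half_log hx, artanh, one_div_mul_eq_div]

lemma sqrt_one_third_lt_iff {t : ℝ} (ht : 0 < t) : √(1 / 3) < t ↔ 1 < 3 * t ^ 2 := by
  rw [Real.sqrt_lt' ht]
  constructor <;> intro <;> linarith

lemma one_lt_three_mul_sq_of_sqrt_one_third_lt {t : ℝ} (ht : √(1 / 3) < t) : 1 < 3 * t ^ 2 :=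
  (sqrt_one_third_lt_iff ((Real.sqrt_nonneg _).trans_lt ht)).mp ht

lemma strictAntiOn_three_mul_div : StrictAntiOn (fun t : ℝ => 3 * t / (3 * t ^ 2 - 1))
    (Ioi √(1 / 3)) := by
  intro a ha b hb hab
  have ha₀ : 0 < a := (Real.sqrt_nonneg _).trans_lt ha
  have ha₁ := one_lt_three_mul_sq_of_sqrt_one_third_lt ha
  have hb₁ := one_lt_three_mul_sq_of_sqrt_one_third_lt hb
  rw [div_lt_div_iff₀ (by linarith) (by linarith)]
  nlinarith [mul_pos (mul_pos ha₀ (ha₀.trans hab)) (sub_pos.mpr hab)]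

lemma strictMonoOn_artanhGap : StrictMonoOn artanhGap (Ioo √(1 / 3) 1) := by
  intro a ha b hb hab
  have hneg : -1 < a := by linarith [(Real.sqrt_nonneg (1 / 3)).trans_lt ha.1]
  have hartanh : artanh a < artanh b := by
    rw [artanh_eq_real_artanh ⟨hneg.le, ha.2.le⟩,
      artanh_eq_real_artanh ⟨(hneg.trans hab).le, hb.2.le⟩]
    exact Real.artanh_lt_artanh hneg hb.2 hab
  have hrat := strictAntiOn_three_mul_div ha.1 hb.1 hab
  simp only [artanhGap]
  linarith

lemma continuousOn_artanhGap : ContinuousOn artanhGap (Ioo √(1 / 3) 1) := by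
  intro t ⟨hlo, hhi⟩
  have h₀ := (Real.sqrt_nonneg (1 / 3)).trans_lt hlo
  have hsub : 1 - t ≠ 0 := by linarith
  have hquot : (1 + t) / (1 - t) ≠ 0 := (div_pos (by linarith) (by linarith)).ne'
  have hden : 3 * t ^ 2 - 1 ≠ 0 := by linarith [one_lt_three_mul_sq_of_sqrt_one_third_lt hlo]
  unfold artanhGap artanh
  exact ContinuousAt.continuousWithinAt (by fun_prop (disch := assumption))

-- At both endpoints `(1 + t) / (1 - t)` is close to `2⁵`; the remaining factor is handled by
-- `1 - x⁻¹ ≤ log x ≤ x - 1`.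
lemma artanhGap_neg_at_0_9371 : artanhGap 0.9371 < 0 := by
  have hsplit :
      Real.log ((1 + 0.9371) / (1 - 0.9371)) = 5 * Real.log 2 + Real.log (19371 / 20128) := by
    rw [← Real.log_rpow two_pos, ← Real.log_mul (by norm_num) (by norm_num)]
    norm_num
  have hlog := Real.log_le_sub_one_of_pos (show (0 : ℝ) < 19371 / 20128 by norm_num)
  have hlog2 := Real.log_two_lt_d9
  rw [artanhGap, artanh, hsplit]
  norm_num at hlog hlog2 ⊢
  linarith

lemma artanhGap_pos_at_0_938 : 0 < artanhGap 0.938 := by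
  have hsplit : Real.log ((1 + 0.938) / (1 - 0.938)) = 5 * Real.log 2 + Real.log (969 / 992) := by
    rw [← Real.log_rpow two_pos, ← Real.log_mul (by norm_num) (by norm_num)]
    norm_num
  have hlog := Real.one_sub_inv_le_log_of_pos (show (0 : ℝ) < 969 / 992 by norm_num)
  have hlog2 := Real.log_two_gt_d9
  rw [artanhGap, artanh, hsplit]
  norm_num at hlog hlog2 ⊢
  linarith

lemma Icc_subset_Ioo_sqrt_one_third : Icc (0.9371 : ℝ) 0.938 ⊆ Ioo √(1 / 3) 1 :=
  Icc_subset_Ioo ((sqrt_one_third_lt_iff (by norm_num)).mpr (by norm_num)) (by norm_num)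

lemma exists_artanhGap_eq_zero : ∃ t ∈ Ioo (0.9371 : ℝ) 0.938, artanhGap t = 0 :=
  intermediate_value_Ioo (by norm_num) (continuousOn_artanhGap.mono Icc_subset_Ioo_sqrt_one_third)
    ⟨artanhGap_neg_at_0_9371, artanhGap_pos_at_0_938⟩

lemma mem_Ioo_of_artanhGap_eq_zero {t : ℝ} (h₀ : 0 < t) (h₁ : t < 1) (h : artanhGap t = 0) :
    t ∈ Ioo √(1 / 3) 1 := by
  have hartanh : 0 < artanh t := by
    rw [artanh_eq_real_artanh ⟨by linarith, h₁.le⟩]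
    exact Real.artanh_pos ⟨h₀, h₁⟩
  have hpos : 0 < 3 * t / (3 * t ^ 2 - 1) := sub_eq_zero.mp h ▸ hartanh
  rw [div_pos_iff_of_pos_left (by linarith)] at hpos
  exact ⟨(sqrt_one_third_lt_iff h₀).mpr (by linarith), h₁⟩

lemma artanhGap_eq_zero_iff {t₀ t : ℝ} (ht₀ : t₀ ∈ Ioo √(1 / 3) 1) (hroot : artanhGap t₀ = 0)
    (h₀ : 0 < t) (h₁ : t < 1) : artanhGap t = 0 ↔ t = t₀ :=
  ⟨fun h => strictMonoOn_artanhGap.injOn (mem_Ioo_of_artanhGap_eq_zero h₀ h₁ h) ht₀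
    (h.trans hroot.symm), fun h => h ▸ hroot⟩

lemma artanh_sqrt_eq_iff_artanhGap_eq_zero {α : ℝ} (hα : α ≤ 1) :
    artanh √(1 - α) = 3 * √(1 - α) / (2 - 3 * α) ↔ artanhGap √(1 - α) = 0 := by
  rw [artanhGap, sub_eq_zero, Real.sq_sqrt (by linarith),
    show 3 * (1 - α) - 1 = 2 - 3 * α by ring]

theorem stmt11 :
    (∃! α₀ : ℝ, α₀ ∈ Set.Ioo (0 : ℝ) 1 ∧
      artanh (Real.sqrt (1 - α₀)) = 3 * Real.sqrt (1 - α₀) / (2 - 3 * α₀)) ∧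
    (∀ α₀ : ℝ, α₀ ∈ Set.Ioo (0 : ℝ) 1 →
      artanh (Real.sqrt (1 - α₀)) = 3 * Real.sqrt (1 - α₀) / (2 - 3 * α₀) →
      α₀ < 2 / 3 ∧ |α₀ - 0.121| < 0.001) := by
  obtain ⟨t₀, ⟨hlo, hhi⟩, hroot⟩ := exists_artanhGap_eq_zero
  have ht₀ := Icc_subset_Ioo_sqrt_one_third ⟨hlo.le, hhi.le⟩
  have hsolve : ∀ α ∈ Ioo (0 : ℝ) 1,
      (artanh √(1 - α) = 3 * √(1 - α) / (2 - 3 * α) ↔ α = 1 - t₀ ^ 2) := by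
    rintro α ⟨hα₀, hα₁⟩
    rw [artanh_sqrt_eq_iff_artanhGap_eq_zero hα₁.le,
      artanhGap_eq_zero_iff ht₀ hroot (Real.sqrt_pos.mpr (by linarith))
        ((Real.sqrt_lt' one_pos).mpr (by linarith)),
      Real.sqrt_eq_iff_eq_sq (by linarith) (by linarith)]
    constructor <;> intro <;> linarith
  have hmem : 1 - t₀ ^ 2 ∈ Ioo (0 : ℝ) 1 := ⟨by nlinarith, by nlinarith⟩
  refine ⟨⟨1 - t₀ ^ 2, ⟨hmem, (hsolve _ hmem).mpr rfl⟩,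
    fun α hα => (hsolve α hα.1).mp hα.2⟩, fun α hα heq => ?_⟩
  rw [(hsolve α hα).mp heq, abs_lt]
  norm_num
  exact ⟨by nlinarith, by nlinarith, by nlinarith⟩
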